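/- If P₁ and P₂ are real polynomials in k satisfying P₁(k)·K(k) + P₂(k)·E(k) = 0 for all k ∈ (−1,1), then P₁ and P₂ are identically zero. (Equivalently, K(k) and E(k) are linearly independent with respect to coefficients that are rational functions of k.) -/

import Mathlib

open Real MeasureTheory intervalIntegral Set Filter Polynomial Topology

/-- Complete elliptic integral of the first kind. -/
noncomputable def Kc (k : ℝ) : ℝ :=
  ∫ z in (0:ℝ)..1, 1 / Real.sqrt ((1 - z ^ 2) * (1 - k ^ 2 * z ^ 2))

/-- Complete elliptic integral of the second kind. -/
noncomputable def Ec (k : ℝ) : ℝ :=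
  ∫ z in (0:ℝ)..1, Real.sqrt (1 - k ^ 2 * z ^ 2) / Real.sqrt (1 - z ^ 2)

lemma sqrt_intg : IntervalIntegrable (fun z : ℝ => (1-z)^(-(1/2):ℝ)) volume 0 1 := by
  have h := ((intervalIntegrable_rpow' (a := 0) (b := 1) (r := -(1/2)) (by norm_num)).comp_sub_left 1).symm
  simpa using h

lemma sqrt_int : ∫ z in (0:ℝ)..1, (1-z)^(-(1/2):ℝ) = 2 := by
  have h := integral_comp_sub_left (a := (0:ℝ)) (b := 1) (fun u : ℝ => u ^ (-(1/2):ℝ)) 1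
  rw [h]
  norm_num
  rw [integral_rpow (by norm_num)]
  rw [show (-(1/2) + 1 : ℝ) = 1/2 by norm_num, Real.zero_rpow (by norm_num), Real.one_rpow]
  norm_num

lemma rpow_half_eq (x : ℝ) (hx : 0 ≤ x) : x^(-(1/2):ℝ) = 1 / Real.sqrt x := by
  rw [Real.rpow_neg hx, Real.sqrt_eq_rpow, one_div]
  norm_num

lemma K_integrand_nonneg (k z : ℝ) : 0 ≤ 1 / Real.sqrt ((1 - z ^ 2) * (1 - k ^ 2 * z ^ 2)) := by
  positivity

lemma E_integrand_nonneg (k z : ℝ) : 0 ≤ Real.sqrt (1 - k ^ 2 * z ^ 2) / Real.sqrt (1 - z ^ 2) := by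
  positivity

lemma prod_lower {k z : ℝ} (hz0 : 0 ≤ z) (hz1 : z ≤ 1) (hk2 : k^2 < 1) :
    (1 - k^2) * (1 - z) ≤ (1 - z^2) * (1 - k^2*z^2) := by
  have e1 : (1-z:ℝ) ≤ 1-z^2 := by nlinarith
  have e2 : (1-k^2:ℝ) ≤ 1-k^2*z^2 := by
    nlinarith [mul_nonneg (sq_nonneg k) (by nlinarith : (0:ℝ) ≤ 1 - z^2)]
  calc (1-k^2)*(1-z) = (1-z)*(1-k^2) := mul_comm _ _
    _ ≤ (1-z^2)*(1-k^2*z^2) := mul_le_mul e1 e2 (by linarith) (by nlinarith)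

lemma K_intg {k : ℝ} (hk : k ∈ Set.Ioo (-1:ℝ) 1) :
    IntervalIntegrable (fun z => 1 / Real.sqrt ((1 - z ^ 2) * (1 - k ^ 2 * z ^ 2))) volume 0 1 := by
  have hk2 : k^2 < 1 := by nlinarith [hk.1, hk.2]
  have hC : (0:ℝ) < Real.sqrt (1 - k^2) := Real.sqrt_pos.2 (by linarith)
  refine ((sqrt_intg.const_mul (1 / Real.sqrt (1 - k^2)))).mono_fun ?_ ?_
  · exact (Measurable.aestronglyMeasurable (by fun_prop))
  · rw [Filter.EventuallyLE]
    filter_upwards [ae_restrict_mem measurableSet_uIoc] with z hz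
    rw [Set.uIoc_of_le (by norm_num : (0:ℝ) ≤ 1)] at hz
    obtain ⟨hz0, hz1⟩ := hz
    have hz0' : (0:ℝ) ≤ z := le_of_lt hz0
    simp only [norm_eq_abs]
    rw [abs_of_nonneg (K_integrand_nonneg k z),
        abs_of_nonneg (mul_nonneg (by positivity) (Real.rpow_nonneg (by linarith) _))]
    rw [rpow_half_eq _ (by linarith)]
    rcases eq_or_lt_of_le hz1 with rfl | hz1'
    · simp
    · have h1 : (0:ℝ) < 1 - z := by linarith
      have hpos : (0:ℝ) < Real.sqrt ((1 - k^2) * (1 - z)) :=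
        Real.sqrt_pos.2 (mul_pos (by linarith) h1)
      have := one_div_le_one_div_of_le hpos (Real.sqrt_le_sqrt (prod_lower hz0' hz1 hk2))
      calc 1 / Real.sqrt ((1 - z^2) * (1 - k^2*z^2)) ≤ 1 / Real.sqrt ((1 - k^2) * (1 - z)) := this
        _ = 1 / Real.sqrt (1 - k^2) * (1 / Real.sqrt (1 - z)) := by
            rw [Real.sqrt_mul (by linarith)]; field_simp

lemma Kc_nonneg (k : ℝ) : 0 ≤ Kc k :=
  intervalIntegral.integral_nonneg (by norm_num) (fun u _ => K_integrand_nonneg k u)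

lemma Ec_nonneg (k : ℝ) : 0 ≤ Ec k :=
  intervalIntegral.integral_nonneg (by norm_num) (fun u _ => E_integrand_nonneg k u)

lemma ae_ne_one : ∀ᵐ z : ℝ, z ≠ (1:ℝ) := by
  rw [ae_iff]
  have : {a : ℝ | ¬ a ≠ 1} = {1} := by ext a; simp
  rw [this]
  exact Real.volume_singleton

lemma E_intg {k : ℝ} (hk : k ∈ Set.Ioo (-1:ℝ) 1) :
    IntervalIntegrable (fun z => Real.sqrt (1 - k ^ 2 * z ^ 2) / Real.sqrt (1 - z ^ 2)) volume 0 1 := by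
  refine sqrt_intg.mono_fun (Measurable.aestronglyMeasurable (by fun_prop)) ?_
  rw [Filter.EventuallyLE]
  filter_upwards [ae_restrict_mem measurableSet_uIoc] with z hz
  rw [Set.uIoc_of_le (by norm_num : (0:ℝ) ≤ 1)] at hz
  obtain ⟨hz0, hz1⟩ := hz
  have hz0' : (0:ℝ) ≤ z := le_of_lt hz0
  simp only [norm_eq_abs]
  rw [abs_of_nonneg (E_integrand_nonneg k z), abs_of_nonneg (Real.rpow_nonneg (by linarith) _),
      rpow_half_eq _ (by linarith)]
  rcases eq_or_lt_of_le hz1 with rfl | hz1'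
  · simp
  · have h1 : (0:ℝ) < 1 - z := by linarith
    refine div_le_div₀ (by norm_num) (Real.sqrt_le_one.2 (by nlinarith [sq_nonneg (k*z)]))
      (Real.sqrt_pos.2 h1) (Real.sqrt_le_sqrt (by nlinarith))

lemma one_le_E {k : ℝ} (hk : k ∈ Set.Ioo (-1:ℝ) 1) : 1 ≤ Ec k := by
  have hk2 : k^2 < 1 := by nlinarith [hk.1, hk.2]
  have h := intervalIntegral.integral_mono_ae_restrict (μ := volume) (a := 0) (b := 1)
    (f := fun _ => (1:ℝ)) (g := fun z => Real.sqrt (1 - k ^ 2 * z ^ 2) / Real.sqrt (1 - z ^ 2))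
    (by norm_num) (intervalIntegrable_const) (E_intg hk) ?_
  · simpa [Ec] using h
  · rw [Filter.EventuallyLE]
    filter_upwards [ae_restrict_mem measurableSet_Icc, ae_restrict_of_ae ae_ne_one] with z hz hne
    obtain ⟨hz0, hz1⟩ := hz
    have hz1' : z < 1 := lt_of_le_of_ne hz1 hne
    have h1 : (0:ℝ) < Real.sqrt (1 - z^2) := Real.sqrt_pos.2 (by nlinarith)
    rw [le_div_iff₀ h1, one_mul]
    refine Real.sqrt_le_sqrt ?_
    nlinarith [mul_nonneg (sq_nonneg k) (by nlinarith : (0:ℝ) ≤ 1 - z^2)]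

lemma E_le_two {k : ℝ} (hk : k ∈ Set.Ioo (-1:ℝ) 1) : Ec k ≤ 2 := by
  rw [← sqrt_int]
  refine intervalIntegral.integral_mono_on (by norm_num) (E_intg hk) sqrt_intg ?_
  intro z hz
  obtain ⟨hz0, hz1⟩ := hz
  rw [rpow_half_eq _ (by linarith)]
  rcases eq_or_lt_of_le hz1 with rfl | hz1'
  · simp
  · have h1 : (0:ℝ) < 1 - z := by linarith
    refine div_le_div₀ (by norm_num) (Real.sqrt_le_one.2 (by nlinarith [sq_nonneg (k*z)]))
      (Real.sqrt_pos.2 h1) (Real.sqrt_le_sqrt (by nlinarith))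

lemma K_up {k : ℝ} (hk : k ∈ Set.Ioo (0:ℝ) 1) : Real.sqrt (1-k) * Kc k ≤ 2 := by
  obtain ⟨hk0, hk1⟩ := hk
  have hk2 : k^2 < 1 := by nlinarith
  have hs : (0:ℝ) < Real.sqrt (1-k) := Real.sqrt_pos.2 (by linarith)
  have hKle : Kc k ≤ (1 / Real.sqrt (1-k)) * 2 := by
    have hint : ∫ z in (0:ℝ)..1, (1 / Real.sqrt (1-k)) * (1-z)^(-(1/2):ℝ)
        = (1 / Real.sqrt (1-k)) * 2 := by
      rw [intervalIntegral.integral_const_mul, sqrt_int]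
    rw [← hint]
    refine intervalIntegral.integral_mono_on (by norm_num) (K_intg ⟨by linarith, hk1⟩)
      (sqrt_intg.const_mul _) ?_
    rintro z ⟨hz0, hz1⟩
    rw [rpow_half_eq _ (by linarith)]
    rcases eq_or_lt_of_le hz1 with rfl | hz1'
    · simp
    · have h1 : (0:ℝ) < 1 - z := by linarith
      have hprod2 : (1-k) * (1-z) ≤ (1-z^2)*(1-k^2*z^2) := by
        have := prod_lower hz0 hz1 hk2
        nlinarith [mul_nonneg (by nlinarith : (0:ℝ) ≤ k - k^2) h1.le]
      have hpos : (0:ℝ) < Real.sqrt ((1-k)*(1-z)) := Real.sqrt_pos.2 (mul_pos (by linarith) h1)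
      calc 1 / Real.sqrt ((1-z^2)*(1-k^2*z^2)) ≤ 1 / Real.sqrt ((1-k)*(1-z)) :=
            one_div_le_one_div_of_le hpos (Real.sqrt_le_sqrt hprod2)
        _ = 1 / Real.sqrt (1-k) * (1 / Real.sqrt (1-z)) := by
            rw [Real.sqrt_mul (by linarith)]; field_simp
  calc Real.sqrt (1-k) * Kc k ≤ Real.sqrt (1-k) * ((1/Real.sqrt (1-k)) * 2) :=
        mul_le_mul_of_nonneg_left hKle hs.le
    _ = 2 := by field_simp

lemma K_low {k : ℝ} (hk : k ∈ Set.Ioo (0:ℝ) 1) : -Real.log (1-k) / 2 ≤ Kc k := by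
  obtain ⟨hk0, hk1⟩ := hk
  have hlog : 0 ≤ -Real.log (1-k) := by
    have := Real.log_nonpos (x := 1-k) (by linarith) (by linarith); linarith
  have hval : ∫ z in (0:ℝ)..1, (2*(1-k*z))⁻¹ = -Real.log (1-k) / (2*k) := by
    have e1 : ∀ z : ℝ, (2*(1-k*z))⁻¹ = (1/2) * (1-k*z)⁻¹ := by
      intro z; rw [mul_inv]; ring
    simp_rw [e1]
    rw [intervalIntegral.integral_const_mul]
    have e2 := intervalIntegral.integral_comp_mul_left (a := (0:ℝ)) (b := 1)
      (fun u : ℝ => (1-u)⁻¹) (ne_of_gt hk0)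
    simp only [mul_zero, mul_one, smul_eq_mul] at e2
    rw [e2]
    have e3 := intervalIntegral.integral_comp_sub_left (a := (0:ℝ)) (b := k) (fun v : ℝ => v⁻¹) 1
    simp only [sub_zero] at e3
    rw [e3, integral_inv_of_pos (by linarith) (by norm_num),
        Real.log_div (by norm_num) (by linarith), Real.log_one]
    field_simp
    ring
  have hmono : ∫ z in (0:ℝ)..1, (2*(1-k*z))⁻¹
      ≤ ∫ z in (0:ℝ)..1, 1 / Real.sqrt ((1-z^2)*(1-k^2*z^2)) := by
    refine intervalIntegral.integral_mono_ae_restrict (by norm_num) ?_ (K_intg ⟨by linarith, hk1⟩) ?_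
    · apply ContinuousOn.intervalIntegrable
      apply ContinuousOn.inv₀ (by fun_prop)
      intro z hz
      rw [Set.uIcc_of_le (by norm_num : (0:ℝ) ≤ 1)] at hz
      obtain ⟨hz0, hz1⟩ := hz
      have : k*z ≤ k := by nlinarith
      exact ne_of_gt (by nlinarith)
    · rw [Filter.EventuallyLE]
      filter_upwards [ae_restrict_mem measurableSet_Icc, ae_restrict_of_ae ae_ne_one] with z hz hne
      obtain ⟨hz0, hz1⟩ := hz
      have hz1' : z < 1 := lt_of_le_of_ne hz1 hne
      have hkz : k*z < 1 := by nlinarith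
      have hkz0 : 0 ≤ k*z := by positivity
      have hsq1 : k^2*z^2 < 1 := by nlinarith [mul_nonneg hkz0 hkz0]
      have hprodpos : (0:ℝ) < (1-z^2)*(1-k^2*z^2) := mul_pos (by nlinarith) (by nlinarith)
      have e1 : 1-z^2 ≤ 2*(1-k*z) := by nlinarith [sq_nonneg (1-z)]
      have e2 : 1-k^2*z^2 ≤ 2*(1-k*z) := by nlinarith [sq_nonneg (1-k*z)]
      have hb : (1-z^2)*(1-k^2*z^2) ≤ (2*(1-k*z))^2 := by
        calc (1-z^2)*(1-k^2*z^2) ≤ (2*(1-k*z))*(2*(1-k*z)) :=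
              mul_le_mul e1 e2 (by nlinarith) (by linarith)
          _ = (2*(1-k*z))^2 := by ring
      have hsq : Real.sqrt ((1-z^2)*(1-k^2*z^2)) ≤ 2*(1-k*z) := by
        calc Real.sqrt ((1-z^2)*(1-k^2*z^2)) ≤ Real.sqrt ((2*(1-k*z))^2) := Real.sqrt_le_sqrt hb
          _ = 2*(1-k*z) := Real.sqrt_sq (by linarith)
      rw [inv_eq_one_div]
      exact one_div_le_one_div_of_le (Real.sqrt_pos.2 hprodpos) hsq
  have hle2 : -Real.log (1-k)/2 ≤ -Real.log (1-k)/(2*k) :=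
    div_le_div_of_nonneg_left hlog (by linarith) (by linarith)
  calc -Real.log (1-k)/2 ≤ -Real.log (1-k)/(2*k) := hle2
    _ = ∫ z in (0:ℝ)..1, (2*(1-k*z))⁻¹ := hval.symm
    _ ≤ Kc k := hmono

lemma tendsto_neg_log : Tendsto (fun k : ℝ => -Real.log (1-k)) (𝓝[<] (1:ℝ)) atTop := by
  rw [← Filter.tendsto_neg_atBot_iff]
  simp only [neg_neg]
  have h1 : Tendsto (fun k : ℝ => 1 - k) (𝓝[<] (1:ℝ)) (𝓝[>] (0:ℝ)) := by
    refine tendsto_nhdsWithin_of_tendsto_nhds_of_eventually_within _ ?_ ?_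
    · have hco : Continuous (fun k : ℝ => 1 - k) := by continuity
      have := hco.tendsto (1:ℝ)
      simp only [sub_self] at this
      exact this.mono_left nhdsWithin_le_nhds
    · filter_upwards [self_mem_nhdsWithin] with k hk
      simp only [Set.mem_Iio] at hk
      simp only [Set.mem_Ioi]
      linarith
  exact Real.tendsto_log_nhdsGT_zero.comp h1

lemma mem_eventually : ∀ᶠ k in 𝓝[<] (1:ℝ), k ∈ Set.Ioo (1/2 : ℝ) 1 :=
  Ioo_mem_nhdsLT_of_mem ⟨by norm_num, le_rfl⟩

lemma key (Q₁ Q₂ : Polynomial ℝ)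
    (h : ∀ k ∈ Set.Ioo (-1:ℝ) 1, Q₁.eval k * Kc k + Q₂.eval k * Ec k = 0) :
    Q₁.eval 1 = 0 ∧ Q₂.eval 1 = 0 := by
  have habs : ∀ k ∈ Set.Ioo (1/2:ℝ) 1, |Q₁.eval k| * Kc k = |Q₂.eval k| * Ec k := by
    intro k hk
    have hh := h k ⟨by linarith [hk.1], hk.2⟩
    have : Q₁.eval k * Kc k = -(Q₂.eval k * Ec k) := by linarith
    have habs2 : |Q₁.eval k * Kc k| = |Q₂.eval k * Ec k| := by rw [this, abs_neg]
    rwa [abs_mul, abs_mul, abs_of_nonneg (Kc_nonneg k), abs_of_nonneg (Ec_nonneg k)] at habs2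
  -- step 1
  have step1 : Q₁.eval 1 = 0 := by
    by_contra hc
    have hcpos : 0 < |Q₁.eval 1| := abs_pos.2 hc
    set c := |Q₁.eval 1| with hcdef
    obtain ⟨M, hM⟩ := isCompact_Icc.exists_bound_of_continuousOn
      (f := fun x : ℝ => Q₂.eval x) (s := Set.Icc 0 1) (Polynomial.continuousOn _)
    simp only [Real.norm_eq_abs] at hM
    have hM0 : 0 ≤ M := le_trans (abs_nonneg _) (hM 0 (by norm_num))
    have htend : Tendsto (fun k : ℝ => |Q₁.eval k|) (𝓝[<] (1:ℝ)) (𝓝 c) := by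
      have : Continuous fun k : ℝ => |Q₁.eval k| := ((Polynomial.continuous Q₁).abs)
      exact (this.tendsto 1).mono_left nhdsWithin_le_nhds
    have hev : ∀ᶠ k in 𝓝[<] (1:ℝ), c/2 ≤ |Q₁.eval k| :=
      htend.eventually_const_le (by linarith)
    have hgt : ∀ᶠ k in 𝓝[<] (1:ℝ), 8*M/c < -Real.log (1-k) :=
      tendsto_neg_log.eventually (eventually_gt_atTop _)
    obtain ⟨k, hk1, hkm, hkg⟩ := (hev.and (mem_eventually.and hgt)).exists
    obtain ⟨hk12, hklt⟩ := hkm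
    have hk' : k ∈ Set.Ioo (0:ℝ) 1 := ⟨by linarith, hklt⟩
    have hk'' : k ∈ Set.Ioo (-1:ℝ) 1 := ⟨by linarith, hklt⟩
    have hlognn : 0 ≤ -Real.log (1-k) := by
      have := Real.log_nonpos (x := 1-k) (by linarith) (by linarith); linarith
    have h1 : c/2 * (-Real.log (1-k)/2) ≤ |Q₁.eval k| * Kc k :=
      mul_le_mul hk1 (K_low hk') (by linarith) (abs_nonneg _)
    have h2 : |Q₂.eval k| * Ec k ≤ M * 2 :=
      mul_le_mul (hM k ⟨by linarith, le_of_lt hklt⟩) (E_le_two hk'') (Ec_nonneg _) hM0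
    have heq := habs k ⟨hk12, hklt⟩
    have hcl : c * (-Real.log (1-k)) ≤ 8*M := by linarith
    have h8 : 8*M < c * (-Real.log (1-k)) := by
      calc 8*M = c*(8*M/c) := by field_simp
        _ < c * (-Real.log (1-k)) := mul_lt_mul_of_pos_left hkg hcpos
    linarith
  refine ⟨step1, ?_⟩
  -- step 2
  obtain ⟨R, hR⟩ := Polynomial.dvd_iff_isRoot.2 step1
  obtain ⟨M, hM⟩ := isCompact_Icc.exists_bound_of_continuousOn
    (f := fun x : ℝ => R.eval x) (s := Set.Icc 0 1) (Polynomial.continuousOn _)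
  simp only [Real.norm_eq_abs] at hM
  have hM0 : 0 ≤ M := le_trans (abs_nonneg _) (hM 0 (by norm_num))
  have hsq : ∀ᶠ k in 𝓝[<] (1:ℝ), |Q₂.eval k| ≤ 2*M*Real.sqrt (1-k) := by
    filter_upwards [mem_eventually] with k hk
    obtain ⟨hk12, hklt⟩ := hk
    have hk' : k ∈ Set.Ioo (0:ℝ) 1 := ⟨by linarith, hklt⟩
    have hk'' : k ∈ Set.Ioo (-1:ℝ) 1 := ⟨by linarith, hklt⟩
    set s := Real.sqrt (1-k) with hs
    have hs0 : 0 ≤ s := Real.sqrt_nonneg _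
    have hss : s * s = 1 - k := Real.mul_self_sqrt (by linarith)
    have hQ1k : |Q₁.eval k| = (1-k) * |R.eval k| := by
      rw [hR, Polynomial.eval_mul]
      simp only [Polynomial.eval_sub, Polynomial.eval_X, Polynomial.eval_C]
      rw [abs_mul, abs_of_neg (by linarith : k - 1 < 0)]
      ring_nf
    have e1 : |Q₂.eval k| ≤ |Q₂.eval k| * Ec k :=
      le_mul_of_one_le_right (abs_nonneg _) (one_le_E hk'')
    have e2 : |Q₂.eval k| * Ec k = (1-k) * |R.eval k| * Kc k := by
      rw [← habs k ⟨hk12, hklt⟩, hQ1k]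
    have hsA : s * Kc k ≤ 2 := K_up hk'
    have hRk : |R.eval k| ≤ M := hM k ⟨by linarith, le_of_lt hklt⟩
    have hprod : (s * Kc k) * |R.eval k| ≤ 2 * M :=
      mul_le_mul hsA hRk (abs_nonneg _) (by norm_num)
    have hfin : (1-k) * |R.eval k| * Kc k ≤ 2*M*s := by
      have h5 := mul_le_mul_of_nonneg_left hprod hs0
      have h6 : (1-k) * |R.eval k| * Kc k = s*(s * Kc k * |R.eval k|) := by
        rw [← hss]; ring
      rw [h6]
      linarith [h5]
    calc |Q₂.eval k| ≤ |Q₂.eval k| * Ec k := e1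
      _ = (1-k) * |R.eval k| * Kc k := e2
      _ ≤ 2*M*s := hfin
  have htendQ : Tendsto (fun k : ℝ => |Q₂.eval k|) (𝓝[<] (1:ℝ)) (𝓝 |Q₂.eval 1|) :=
    (((Polynomial.continuous Q₂).abs).tendsto 1).mono_left nhdsWithin_le_nhds
  have htends : Tendsto (fun k : ℝ => 2*M*Real.sqrt (1-k)) (𝓝[<] (1:ℝ)) (𝓝 0) := by
    have hcont : Continuous fun k : ℝ => 2*M*Real.sqrt (1-k) :=
      continuous_const.mul ((continuous_const.sub continuous_id).sqrt)
    have := (hcont.tendsto 1).mono_left (nhdsWithin_le_nhds (s := Set.Iio (1:ℝ)))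
    simpa using this
  have hle : |Q₂.eval 1| ≤ 0 := le_of_tendsto_of_tendsto htendQ htends hsq
  have := abs_nonneg (Q₂.eval 1)
  have : |Q₂.eval 1| = 0 := le_antisymm hle (abs_nonneg _)
  exact abs_eq_zero.1 this

/-- `K(k)` and `E(k)` are linearly independent with respect to polynomial
(equivalently, rational function) coefficients in `k`. -/
theorem K_E_linear_independent (P₁ P₂ : Polynomial ℝ)
    (h : ∀ k ∈ Set.Ioo (-1 : ℝ) 1, P₁.eval k * Kc k + P₂.eval k * Ec k = 0) :
    P₁ = 0 ∧ P₂ = 0 := by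
  have key2 : ∀ n : ℕ, (X - C (1:ℝ))^n ∣ P₁ ∧ (X - C (1:ℝ))^n ∣ P₂ := by
    intro n
    induction n with
    | zero => simp
    | succ n ih =>
      obtain ⟨⟨Q₁, hQ₁⟩, ⟨Q₂, hQ₂⟩⟩ := ih
      have hrel : ∀ k ∈ Set.Ioo (-1:ℝ) 1, Q₁.eval k * Kc k + Q₂.eval k * Ec k = 0 := by
        intro k hk
        have hh := h k hk
        rw [hQ₁, hQ₂] at hh
        simp only [Polynomial.eval_mul, Polynomial.eval_pow, Polynomial.eval_sub,
          Polynomial.eval_X, Polynomial.eval_C] at hh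
        have hne : ((k-1)^n : ℝ) ≠ 0 := pow_ne_zero _ (sub_ne_zero.2 (ne_of_lt hk.2))
        have h0 : (k-1)^n * (Q₁.eval k * Kc k + Q₂.eval k * Ec k) = 0 := by
          linear_combination hh
        exact (mul_eq_zero.1 h0).resolve_left hne
      obtain ⟨e1, e2⟩ := key Q₁ Q₂ hrel
      obtain ⟨R₁, hR₁⟩ := Polynomial.dvd_iff_isRoot.2 e1
      obtain ⟨R₂, hR₂⟩ := Polynomial.dvd_iff_isRoot.2 e2
      exact ⟨⟨R₁, by rw [hQ₁, hR₁]; ring⟩, ⟨R₂, by rw [hQ₂, hR₂]; ring⟩⟩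
  have hP₁ : P₁ = 0 := by
    by_contra hne
    have hd := Polynomial.natDegree_le_of_dvd (key2 (P₁.natDegree + 1)).1 hne
    rw [Polynomial.natDegree_pow, Polynomial.natDegree_X_sub_C] at hd
    omega
  refine ⟨hP₁, ?_⟩
  have hroots : ∀ k ∈ Set.Ioo (-1:ℝ) 1, P₂.IsRoot k := by
    intro k hk
    have hh := h k hk
    rw [hP₁] at hh
    simp only [Polynomial.eval_zero, zero_mul, zero_add] at hh
    have hE : Ec k ≠ 0 := by have := one_le_E hk; linarith
    exact (mul_eq_zero.1 hh).resolve_right hE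
  refine Polynomial.eq_zero_of_infinite_isRoot _ ?_
  exact (Set.infinite_coe_iff.1 (Set.Ioo.infinite (by norm_num : (-1:ℝ) < 1))).mono hroots
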